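/- (Schäffer-type model: structure of Γ_n-isometric lifts built on the Schäffer dilation.) Let n ≥ 2 and let (S_1,…,S_n) be a commuting tuple of bounded operators on a complex Hilbert space H with S_n a contraction; write 𝒟 := 𝒟_{S_n}. Let 𝐃 : H → ℓ²(ℕ,𝒟) be the operator 𝐃h := (D_{S_n} h, 0, 0, …), and let Ŵ_n be the block operator [[S_n, 0],[𝐃, S]] on H ⊕ ℓ²(ℕ,𝒟) (the Schäffer isometric dilation of S_n). For i = 1,…,n−1 let X_i : H → ℓ²(ℕ,𝒟) and Y_i on ℓ²(ℕ,𝒟) be bounded operators and set Ŵ_i := [[S_i, 0],[X_i, Y_i]]. Assume that (Ŵ_1,…,Ŵ_n) is a commuting tuple and that Ŵ_i = Ŵ_{n−i}* Ŵ_n for every i = 1,…,n−1. Then there exist unique bounded operators F_1,…,F_{n−1} on 𝒟 such that for each i = 1,…,n−1: Y_i = (F_i)~ + S∘(F_{n−i}*)~ (the Toeplitz operator with symbol Ψ_i(z) = F_i + z F_{n−i}*), X_i h = (F_{n−i}* D_{S_n} h, 0, 0, …) for all h ∈ H, and S_i − S_{n−i}* S_n = D_{S_n} F_i D_{S_n}.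 -/

import Mathlib

/-!
Reading `Ŵ_i = Ŵ_{n-i}* Ŵ_n` block by block gives `Y_i = Y_{n-i}* S`, `X_i = Y_{n-i}* 𝐃` and
`S_i - S_{n-i}* S_n = X_{n-i}* 𝐃`, while `Ŵ_i Ŵ_n = Ŵ_n Ŵ_i` gives `Y_i S = S Y_i`.
An operator commuting with `S` is determined by its values on the first coordinate, and
`Y_i = Y_{n-i}* S` forces `Y_i (x, 0, 0, …) = (F_i x, F_{n-i}* x, 0, …)`, where `F_i` is the
`(0, 0)` entry of `Y_i`; hence `Y_i` is the Toeplitz operator with symbol `F_i + z F_{n-i}*`.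
Since `𝐃` maps into the first coordinate, `X_i = Y_{n-i}* 𝐃` and `X_{n-i}* 𝐃 = 𝐃* Y_i 𝐃` only
see these `(0, 0)` entries, which gives the two remaining identities. Uniqueness holds because
`F_i` is read off from `Y_i`.
-/

noncomputable section

open scoped ENNReal

namespace GammaModel

variable {E : Type*} [NormedAddCommGroup E] [NormedSpace ℂ E]

/-- The `E`-valued Hardy space `H²_E(𝔻)`, identified with `ℓ²(ℕ, E)`. -/
abbrev L2 (E : Type*) [NormedAddCommGroup E] [NormedSpace ℂ E] : Type _ :=
  lp (fun _ : ℕ => E) 2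

/-- The underlying function of the unilateral shift. -/
def shiftFun (f : ℕ → E) : ℕ → E
  | 0 => 0
  | (k + 1) => f k

lemma rpow_toReal_two (x : ℝ) : x ^ ((2 : ℝ≥0∞)).toReal = x ^ (2 : ℕ) := by
  rw [show ((2 : ℝ≥0∞)).toReal = ((2 : ℕ) : ℝ) by norm_num, Real.rpow_natCast]

lemma summable_sq_of_mem (f : L2 E) :
    Summable (fun k => ‖(f : ∀ _ : ℕ, E) k‖ ^ (2 : ℕ)) := by
  have h := lp.memℓp f
  rw [memℓp_gen_iff (by norm_num)] at h
  simpa [rpow_toReal_two] using h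

lemma memℓp_shiftFun (f : L2 E) : Memℓp (shiftFun (f : ∀ _ : ℕ, E)) 2 := by
  rw [memℓp_gen_iff (by norm_num)]
  apply (summable_nat_add_iff 1).mp
  simpa [shiftFun, rpow_toReal_two] using summable_sq_of_mem f

/-- The unilateral shift as a linear map on `ℓ²(ℕ, E)`. -/
def shiftLM : L2 E →ₗ[ℂ] L2 E where
  toFun f := ⟨shiftFun (f : ∀ _ : ℕ, E), memℓp_shiftFun f⟩
  map_add' f g := by
    ext k
    cases k <;> simp [shiftFun, lp.coeFn_add, Pi.add_apply] <;> erw [Pi.add_apply] <;> simp [shiftFun]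
  map_smul' c f := by
    ext k
    cases k <;> simp [shiftFun, lp.coeFn_smul, Pi.smul_apply]

lemma norm_shiftLM (f : L2 E) : ‖shiftLM f‖ = ‖f‖ := by
  have h2 : (0:ℝ) < ((2 : ℝ≥0∞)).toReal := by norm_num
  have hs := lp.norm_rpow_eq_tsum h2 (shiftLM f)
  have hf := lp.norm_rpow_eq_tsum h2 f
  have hsum : Summable (fun k => ‖(shiftLM f : ∀ _ : ℕ, E) k‖ ^ ((2:ℝ≥0∞)).toReal) := by
    have h := memℓp_shiftFun f
    rw [memℓp_gen_iff h2] at h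
    exact h
  have key : ∑' k, ‖(shiftLM f : ∀ _ : ℕ, E) k‖ ^ ((2:ℝ≥0∞)).toReal
      = ∑' k, ‖(f : ∀ _ : ℕ, E) k‖ ^ ((2:ℝ≥0∞)).toReal := by
    rw [hsum.tsum_eq_zero_add]
    simp [shiftLM, shiftFun]
  have : ‖shiftLM f‖ ^ ((2:ℝ≥0∞)).toReal = ‖f‖ ^ ((2:ℝ≥0∞)).toReal := by
    rw [hs, hf, key]
  rw [rpow_toReal_two, rpow_toReal_two] at this
  have h1 : (0:ℝ) ≤ ‖shiftLM f‖ := norm_nonneg _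
  have h2' : (0:ℝ) ≤ ‖f‖ := norm_nonneg _
  nlinarith [this, h1, h2']

/-- The unilateral shift `S` on `ℓ²(ℕ, E)`: `(Sf)(0) = 0`, `(Sf)(k+1) = f(k)`. -/
def shiftL : L2 E →L[ℂ] L2 E :=
  LinearMap.mkContinuous shiftLM 1 (fun f => by rw [norm_shiftLM]; simp)

@[simp] lemma shiftL_apply_zero (f : L2 E) : (shiftL f : ∀ _ : ℕ, E) 0 = 0 := rfl

@[simp] lemma shiftL_apply_succ (f : L2 E) (k : ℕ) :
    (shiftL f : ∀ _ : ℕ, E) (k + 1) = (f : ∀ _ : ℕ, E) k := rfl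

lemma memℓp_diagFun (C : E →L[ℂ] E) (f : L2 E) :
    Memℓp (fun k => C ((f : ∀ _ : ℕ, E) k)) 2 := by
  rw [memℓp_gen_iff (by norm_num)]
  have hf := summable_sq_of_mem f
  refine Summable.of_nonneg_of_le (f := fun k => ‖C‖ ^ (2:ℕ) * ‖(f : ∀ _ : ℕ, E) k‖ ^ (2:ℕ))
    (fun k => by positivity) (fun k => ?_) (hf.mul_left _)
  show ‖C ((f : ∀ _ : ℕ, E) k)‖ ^ ((2:ℝ≥0∞)).toReal ≤ ‖C‖ ^ (2:ℕ) * ‖(f : ∀ _ : ℕ, E) k‖ ^ (2:ℕ)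
  rw [rpow_toReal_two, ← mul_pow]
  exact pow_le_pow_left₀ (norm_nonneg _) (C.le_opNorm _) 2

/-- The diagonal operator `C̃` on `ℓ²(ℕ, E)`: `(C̃ f)(k) = C (f k)`. -/
def diagLM (C : E →L[ℂ] E) : L2 E →ₗ[ℂ] L2 E where
  toFun f := ⟨fun k => C ((f : ∀ _ : ℕ, E) k), memℓp_diagFun C f⟩
  map_add' f g := by ext k; simp [lp.coeFn_add, Pi.add_apply]; rfl
  map_smul' c f := by ext k; simp [lp.coeFn_smul, Pi.smul_apply]

lemma norm_diagLM (C : E →L[ℂ] E) (f : L2 E) : ‖diagLM C f‖ ≤ ‖C‖ * ‖f‖ := by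
  have h2 : (0:ℝ) < ((2 : ℝ≥0∞)).toReal := by norm_num
  have hs := lp.norm_rpow_eq_tsum h2 (diagLM C f)
  have hf := lp.norm_rpow_eq_tsum h2 f
  have hsum : Summable (fun k => ‖(diagLM C f : ∀ _ : ℕ, E) k‖ ^ ((2:ℝ≥0∞)).toReal) := by
    have h := memℓp_diagFun C f
    rw [memℓp_gen_iff h2] at h
    exact h
  have hle : ‖diagLM C f‖ ^ (2:ℕ) ≤ (‖C‖ * ‖f‖) ^ (2:ℕ) := by
    rw [← rpow_toReal_two, hs]
    calc ∑' k, ‖(diagLM C f : ∀ _ : ℕ, E) k‖ ^ ((2:ℝ≥0∞)).toReal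
        ≤ ∑' k, ‖C‖ ^ (2:ℕ) * ‖(f : ∀ _ : ℕ, E) k‖ ^ (2:ℕ) := by
          apply Summable.tsum_le_tsum _ hsum ((summable_sq_of_mem f).mul_left _)
          intro k
          show ‖(diagLM C f : ∀ _ : ℕ, E) k‖ ^ ((2:ℝ≥0∞)).toReal
            ≤ ‖C‖ ^ (2:ℕ) * ‖(f : ∀ _ : ℕ, E) k‖ ^ (2:ℕ)
          rw [rpow_toReal_two, ← mul_pow]
          exact pow_le_pow_left₀ (norm_nonneg _) (C.le_opNorm _) 2
      _ = ‖C‖ ^ (2:ℕ) * ∑' k, ‖(f : ∀ _ : ℕ, E) k‖ ^ (2:ℕ) := by rw [tsum_mul_left]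
      _ = (‖C‖ * ‖f‖) ^ (2:ℕ) := by
          rw [mul_pow]
          congr 1
          rw [← rpow_toReal_two ‖f‖, hf]
          exact (tsum_congr (fun k => by rw [rpow_toReal_two])).symm
  have := le_of_pow_le_pow_left₀ (by norm_num) (by positivity) hle
  exact this

/-- The operator `C̃` on `ℓ²(ℕ, E)` induced by `C : E →L[ℂ] E`, `(C̃ f)(k) = C (f k)`. -/
def diagL (C : E →L[ℂ] E) : L2 E →L[ℂ] L2 E :=
  LinearMap.mkContinuous (diagLM C) ‖C‖ (norm_diagLM C)

@[simp] lemma diagL_apply (C : E →L[ℂ] E) (f : L2 E) (k : ℕ) :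
    (diagL C f : ∀ _ : ℕ, E) k = C ((f : ∀ _ : ℕ, E) k) := rfl

end GammaModel

noncomputable section

namespace GammaModel

variable {H K : Type*} [NormedAddCommGroup H] [NormedSpace ℂ H]
  [NormedAddCommGroup K] [NormedSpace ℂ K]

/-- The block-diagonal operator `A ⊕ B` on the Hilbert space direct sum `H ⊕ K`
(realized as `WithLp 2 (H × K)`). -/
def blockDiag (A : H →L[ℂ] H) (B : K →L[ℂ] K) :
    WithLp 2 (H × K) →L[ℂ] WithLp 2 (H × K) :=
  ((WithLp.prodContinuousLinearEquiv 2 ℂ H K).symm : H × K →L[ℂ] WithLp 2 (H × K)).comp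
    ((A.prodMap B).comp
      ((WithLp.prodContinuousLinearEquiv 2 ℂ H K) : WithLp 2 (H × K) →L[ℂ] H × K))

/-- A lower-triangular `2 × 2` block operator `[[A, 0], [C, D]]` on the Hilbert space
direct sum `H ⊕ K` (realized as `WithLp 2 (H × K)`). -/
def blockLT (A : H →L[ℂ] H) (C : H →L[ℂ] K) (D : K →L[ℂ] K) :
    WithLp 2 (H × K) →L[ℂ] WithLp 2 (H × K) :=
  ((WithLp.prodContinuousLinearEquiv 2 ℂ H K).symm : H × K →L[ℂ] WithLp 2 (H × K)).comp
    (((A.comp (ContinuousLinearMap.fst ℂ H K)).prod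
        ((C.comp (ContinuousLinearMap.fst ℂ H K)) + (D.comp (ContinuousLinearMap.snd ℂ H K)))).comp
      ((WithLp.prodContinuousLinearEquiv 2 ℂ H K) : WithLp 2 (H × K) →L[ℂ] H × K))

end GammaModel

namespace GammaModel

instance completeSpace_topologicalClosure {H : Type*} [NormedAddCommGroup H] [NormedSpace ℂ H]
    [CompleteSpace H] (K : Submodule ℂ H) : CompleteSpace ↥(K.topologicalClosure) :=
  K.isClosed_topologicalClosure.completeSpace_coe

end GammaModel

namespace GammaModel

open ContinuousLinearMap
open scoped InnerProductSpace

section Shift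

variable {E : Type*} [NormedAddCommGroup E] [NormedSpace ℂ E]

lemma shiftL_single (m : ℕ) (x : E) :
    shiftL (lp.single 2 m x : L2 E) = lp.single 2 (m + 1) x := by
  ext (_ | k) <;> simp [lp.single_apply, Pi.single_apply]

lemma commute_diagL_shiftL (C : E →L[ℂ] E) :
    Commute (diagL C) (shiftL : L2 E →L[ℂ] L2 E) := by
  ext f (_ | k) <;> simp

lemma apply_single_succ_of_commute_shiftL {A : L2 E →L[ℂ] L2 E} (hA : Commute A shiftL)
    (m : ℕ) (x : E) : A (lp.single 2 (m + 1) x) = shiftL (A (lp.single 2 m x)) := by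
  rw [← shiftL_single]
  exact DFunLike.congr_fun hA.eq _

lemma eq_of_commute_shiftL {A B : L2 E →L[ℂ] L2 E}
    (hA : Commute A shiftL) (hB : Commute B shiftL)
    (h : ∀ x, A (lp.single 2 0 x) = B (lp.single 2 0 x)) : A = B := by
  refine lp.ext_continuousLinearMap ENNReal.ofNat_ne_top fun m =>
    ContinuousLinearMap.ext fun x => ?_
  change A (lp.single 2 m x) = B (lp.single 2 m x)
  induction m with
  | zero => exact h x
  | succ m ih =>
    rw [apply_single_succ_of_commute_shiftL hA, apply_single_succ_of_commute_shiftL hB, ih]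

/-- The Toeplitz operator `M_Φ = Ã + S B̃` with analytic symbol `Φ(z) = A + z B`. -/
def toeplitz (A B : E →L[ℂ] E) : L2 E →L[ℂ] L2 E :=
  diagL A + shiftL.comp (diagL B)

def cornerEntry (A : L2 E →L[ℂ] L2 E) : E →L[ℂ] E :=
  (lp.evalCLM ℂ (fun _ => E) 2 0).comp
    (A.comp (lp.singleContinuousLinearMap ℂ (fun _ => E) 2 0))

lemma cornerEntry_apply (A : L2 E →L[ℂ] L2 E) (x : E) :
    cornerEntry A x = A (lp.single 2 0 x) 0 :=
  rfl

lemma commute_toeplitz_shiftL (A B : E →L[ℂ] E) : Commute (toeplitz A B) shiftL :=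
  (commute_diagL_shiftL A).add_left ((Commute.refl shiftL).mul_left (commute_diagL_shiftL B))

lemma toeplitz_single_zero (A B : E →L[ℂ] E) (x : E) :
    toeplitz A B (lp.single 2 0 x) = lp.single 2 0 (A x) + lp.single 2 1 (B x) := by
  ext (_ | _ | k) <;> simp [toeplitz, lp.single_apply]

lemma cornerEntry_toeplitz (A B : E →L[ℂ] E) : cornerEntry (toeplitz A B) = A := by
  ext x
  simp [cornerEntry_apply, toeplitz_single_zero]

lemma eq_single_zero_iff (f : L2 E) (x : E) :
    f = lp.single 2 0 x ↔ f 0 = x ∧ ∀ k, f (k + 1) = 0 := by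
  constructor
  · rintro rfl
    simp [lp.single_apply]
  · rintro ⟨h₀, hsucc⟩
    ext (_ | k)
    · simp [h₀]
    · simp [hsucc, lp.single_apply]

end Shift

section Adjoint

variable {E : Type*} [NormedAddCommGroup E] [InnerProductSpace ℂ E] [CompleteSpace E]

lemma adjoint_toeplitz_single_zero (A B : E →L[ℂ] E) (x : E) :
    adjoint (toeplitz A B) (lp.single 2 0 x) = lp.single 2 0 (adjoint A x) := by
  refine ext_inner_right ℂ fun f => ?_
  rw [adjoint_inner_left, lp.inner_single_left, lp.inner_single_left, adjoint_inner_left]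
  simp [toeplitz]

theorem eq_toeplitz_of_eq_adjoint_mul_shiftL {Y₁ Y₂ : L2 E →L[ℂ] L2 E}
    (hrel : Y₁ = adjoint Y₂ * shiftL) (h₁ : Commute Y₁ shiftL)
    (h₂ : Commute Y₂ shiftL) :
    Y₁ = toeplitz (cornerEntry Y₁) (adjoint (cornerEntry Y₂)) := by
  refine eq_of_commute_shiftL h₁ (commute_toeplitz_shiftL _ _) fun x => ?_
  have column : ∀ k y, ⟪Y₁ (lp.single 2 0 x) (k + 1), y⟫_ℂ =
      ⟪x, Y₂ (lp.single 2 (k + 1) y) 1⟫_ℂ := by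
    intro k y
    rw [← lp.inner_single_right, hrel, mul_apply_eq_comp, adjoint_inner_left,
      shiftL_single, lp.inner_single_left]
  rw [toeplitz_single_zero]
  refine lp.ext (funext fun k => ?_)
  rcases k with _ | _ | k
  · simp [cornerEntry_apply]
  · refine ext_inner_right ℂ fun y => ?_
    rw [column 0 y, apply_single_succ_of_commute_shiftL h₂]
    simp [cornerEntry_apply, adjoint_inner_left]
  · refine ext_inner_right ℂ fun y => ?_
    rw [column (k + 1) y, apply_single_succ_of_commute_shiftL h₂,
      apply_single_succ_of_commute_shiftL h₂]
    simp

lemma adjoint_apply_eq_of_apply_eq_single_zero {H : Type*} [NormedAddCommGroup H]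
    [InnerProductSpace ℂ H] [CompleteSpace H] {K : Submodule ℂ H} [CompleteSpace K]
    {T : H →L[ℂ] H} (hT : IsSelfAdjoint T) (hK : ∀ h, T h ∈ K) {D : H →L[ℂ] L2 K}
    (hD : ∀ h, D h = lp.single 2 0 ⟨T h, hK h⟩) (w : L2 K) :
    adjoint D w = T (w 0) := by
  refine ext_inner_right ℂ fun h => ?_
  rw [adjoint_inner_left, hD, lp.inner_single_right, Submodule.coe_inner]
  exact (hT.isSymmetric _ _).symm

end Adjoint

section Block

variable {H K : Type*} [NormedAddCommGroup H] [InnerProductSpace ℂ H]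
  [NormedAddCommGroup K] [InnerProductSpace ℂ K]

lemma commute_of_commute_blockLT
    {A A' : H →L[ℂ] H} {C C' : H →L[ℂ] K} {D D' : K →L[ℂ] K}
    (h : Commute (blockLT A C D) (blockLT A' C' D')) : Commute D D' := by
  ext f
  simpa [blockLT] using congrArg WithLp.snd (DFunLike.congr_fun h.eq (WithLp.toLp 2 (0, f)))

lemma blocks_eq_of_blockLT_eq_adjoint_mul [CompleteSpace H] [CompleteSpace K]
    {A A' A'' : H →L[ℂ] H} {C C' C'' : H →L[ℂ] K} {D D' D'' : K →L[ℂ] K}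
    (h : blockLT A C D = adjoint (blockLT A' C' D') * blockLT A'' C'' D'') :
    A = adjoint A' * A'' + adjoint C' ∘L C'' ∧ C = adjoint D' ∘L C'' ∧
      D = adjoint D' * D'' := by
  have key : ∀ u v,
      ⟪blockLT A C D u, v⟫_ℂ = ⟪blockLT A'' C'' D'' u, blockLT A' C' D' v⟫_ℂ := by
    intro u v
    rw [h, mul_apply_eq_comp, adjoint_inner_left]
  refine ⟨?_, ?_, ?_⟩ <;> ext x <;> refine ext_inner_right ℂ fun y => ?_
  · simpa [WithLp.prod_inner_apply, blockLT, inner_add_left, adjoint_inner_left]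
      using key (WithLp.toLp 2 (x, 0)) (WithLp.toLp 2 (y, 0))
  · simpa [WithLp.prod_inner_apply, blockLT, adjoint_inner_left]
      using key (WithLp.toLp 2 (x, 0)) (WithLp.toLp 2 (0, y))
  · simpa [WithLp.prod_inner_apply, blockLT, adjoint_inner_left]
      using key (WithLp.toLp 2 (0, x)) (WithLp.toLp 2 (0, y))

end Block

end GammaModel

open GammaModel ContinuousLinearMap

/-- (Schäffer-type model.) Suppose the lower-triangular block operators
`Ŵ_i = [[S_i, 0], [X_i, Y_i]]` together with the Schäffer dilation `Ŵ_n = [[S_n, 0], [𝐃, S]]`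
form a commuting tuple satisfying `Ŵ_i = Ŵ_{n-i}* Ŵ_n`. Then there are unique operators
`F_1, …, F_{n-1}` on `𝒟_{S_n}` such that `Y_i` is the Toeplitz operator with symbol
`F_i + z F_{n-i}*`, `X_i h = (F_{n-i}* D_{S_n} h, 0, 0, …)`, and
`S_i − S_{n-i}* S_n = D_{S_n} F_i D_{S_n}` (so the `F_i` are the fundamental operators). -/
theorem schaffer_model_structure {n : ℕ} (hn : 2 ≤ n)
    {H : Type*} [NormedAddCommGroup H] [InnerProductSpace ℂ H] [CompleteSpace H]
    (S : Fin n → H →L[ℂ] H)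
    (DT : H →L[ℂ] H) (hDTpos : DT.IsPositive)
    (Dbold : H →L[ℂ] L2 ↥((LinearMap.range (DT : H →ₗ[ℂ] H)).topologicalClosure))
    (hDbold : ∀ h : H,
      (((Dbold h : ∀ _ : ℕ, ↥((LinearMap.range (DT : H →ₗ[ℂ] H)).topologicalClosure)) 0 : H) = DT h) ∧
      (∀ k : ℕ, (Dbold h : ∀ _ : ℕ, ↥((LinearMap.range (DT : H →ₗ[ℂ] H)).topologicalClosure)) (k + 1) = 0))
    (X : Fin (n - 1) → H →L[ℂ] L2 ↥((LinearMap.range (DT : H →ₗ[ℂ] H)).topologicalClosure))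
    (Y : Fin (n - 1) → L2 ↥((LinearMap.range (DT : H →ₗ[ℂ] H)).topologicalClosure)
      →L[ℂ] L2 ↥((LinearMap.range (DT : H →ₗ[ℂ] H)).topologicalClosure))
    (hcommW : (∀ i j : Fin (n - 1),
        blockLT (S (Fin.castLE (by omega) i)) (X i) (Y i)
            * blockLT (S (Fin.castLE (by omega) j)) (X j) (Y j)
          = blockLT (S (Fin.castLE (by omega) j)) (X j) (Y j)
            * blockLT (S (Fin.castLE (by omega) i)) (X i) (Y i)) ∧
      (∀ i : Fin (n - 1),
        blockLT (S (Fin.castLE (by omega) i)) (X i) (Y i)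
            * blockLT (S ⟨n - 1, by omega⟩) Dbold shiftL
          = blockLT (S ⟨n - 1, by omega⟩) Dbold shiftL
            * blockLT (S (Fin.castLE (by omega) i)) (X i) (Y i)))
    (hrelW : ∀ i : Fin (n - 1),
      blockLT (S (Fin.castLE (by omega) i)) (X i) (Y i)
        = adjoint (blockLT (S (Fin.castLE (by omega) (Fin.rev i))) (X (Fin.rev i)) (Y (Fin.rev i)))
          * blockLT (S ⟨n - 1, by omega⟩) Dbold shiftL) :
    ∃! F : Fin (n - 1) → (↥((LinearMap.range (DT : H →ₗ[ℂ] H)).topologicalClosure)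
        →L[ℂ] ↥((LinearMap.range (DT : H →ₗ[ℂ] H)).topologicalClosure)),
      ∀ i : Fin (n - 1),
        (Y i = diagL (F i) + shiftL.comp (diagL (adjoint (F (Fin.rev i))))) ∧
        (∀ h : H,
          (((X i h : ∀ _ : ℕ, ↥((LinearMap.range (DT : H →ₗ[ℂ] H)).topologicalClosure)) 0 : H)
            = (↑((adjoint (F (Fin.rev i)))
                ⟨DT h, Submodule.le_topologicalClosure _ (LinearMap.mem_range_self _ _)⟩) : H)) ∧
          (∀ k : ℕ,
            (X i h : ∀ _ : ℕ, ↥((LinearMap.range (DT : H →ₗ[ℂ] H)).topologicalClosure)) (k + 1) = 0)) ∧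
        (∀ h : H,
          S (Fin.castLE (by omega) i) h
              - adjoint (S (Fin.castLE (by omega) (Fin.rev i))) (S ⟨n - 1, by omega⟩ h)
            = DT (↑(F i ⟨DT h, Submodule.le_topologicalClosure _ (LinearMap.mem_range_self _ _)⟩))) := by
  have hmem : ∀ h, DT h ∈ (LinearMap.range (DT : H →ₗ[ℂ] H)).topologicalClosure :=
    fun h => Submodule.le_topologicalClosure _ (LinearMap.mem_range_self _ _)
  have hD : ∀ h, Dbold h = lp.single 2 0 ⟨DT h, hmem h⟩ :=
    fun h => (eq_single_zero_iff _ _).2 ⟨Subtype.ext (hDbold h).1, (hDbold h).2⟩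
  have hblock := fun i => blocks_eq_of_blockLT_eq_adjoint_mul (hrelW i)
  have hY : ∀ i, Y i = toeplitz (cornerEntry (Y i)) (adjoint (cornerEntry (Y (Fin.rev i)))) :=
    fun i => eq_toeplitz_of_eq_adjoint_mul_shiftL (hblock i).2.2
      (commute_of_commute_blockLT (hcommW.2 i)) (commute_of_commute_blockLT (hcommW.2 _))
  have hX : ∀ i h,
      X i h = lp.single 2 0 (adjoint (cornerEntry (Y (Fin.rev i))) ⟨DT h, hmem h⟩) := by
    intro i h
    rw [(hblock i).2.1, comp_apply, hD, hY (Fin.rev i), adjoint_toeplitz_single_zero,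
      cornerEntry_toeplitz]
  refine ⟨fun i => cornerEntry (Y i), fun i => ⟨hY i, fun h => ?_, fun h => ?_⟩,
    fun F hF => ?_⟩
  · obtain ⟨h₀, hsucc⟩ := (eq_single_zero_iff _ _).1 (hX i h)
    exact ⟨congrArg Subtype.val h₀, hsucc⟩
  · rw [(hblock i).1, add_apply, mul_apply_eq_comp, add_sub_cancel_left, (hblock (Fin.rev i)).2.1,
      Fin.rev_rev, adjoint_comp, adjoint_adjoint, comp_apply, hD, comp_apply,
      adjoint_apply_eq_of_apply_eq_single_zero hDTpos.isSelfAdjoint hmem hD]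
    rfl
  · funext i
    exact ((congrArg cornerEntry (hF i).1).trans (cornerEntry_toeplitz _ _)).symm
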